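/- arXiv:1901.09572 — 3 statements merged into one kernel-verified Lean document; each statement's English description precedes it below -/
import Mathlib

section
/- Let a, b ∈ ℝ, α, A ∈ ℝ \ {0}, n ∈ ℕ, and Q(β) = β(β−1) + aβ + b with Q(α) ≠ 0. Define for i = 0,…,n: c_i = (−1)^{n−i} · (n!/i!) · (A/Q(α)^{n−i+1}) · Σ_{j=0}^{⌊(n−i)/2⌋} (−1)^j · C(n−i−j, j) · Q'(α)^{n−i−2j} · Q(α)^j. Then the function y_p(x) = x^α · Σ_{i=0}^{n} c_i (ln x)^i satisfies x²y_p''(x) + a·x·y_p'(x) + b·y_p(x) = A·x^α·(ln x)^n for all x > 0. -/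
/-!
Substituting `t = log x`, the Euler operator `x²D² + a x D + b` maps `x ^ α * p (log x)` to
`x ^ α * (p'' + Q'(α) p' + Q(α) p) (log x)`, so it suffices to solve
`p'' + P p' + Q p = A tⁿ` with `P = Q'(α)`, `Q = Q(α) ≠ 0`. Formally inverting `D² + P D + Q`
gives `p = ∑ₘ rₘ Dᵐ tⁿ` with `∑ₘ rₘ zᵐ = A / (Q + P z + z²)`, and the recurrence of the
`rₘ` shows `rₘ = (-1)ᵐ A Uₘ₊₁(P, Q) / Q^(m+1)` for the Lucas sequence `U`, whose diagonal
binomial expansion is the inner sum of the coefficients `cᵢ`.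
-/

open Real Finset Polynomial
open scoped Nat

section Lucas

variable {R : Type*} [CommRing R] (P Q : R)

def lucasTerm (m j : ℕ) : R := (-1) ^ j * ((m - j).choose j : R) * P ^ (m - 2 * j) * Q ^ j

/-- The Lucas sequence `Uₘ₊₁(P, Q)`, given by its diagonal binomial expansion. -/
def lucasU (m : ℕ) : R := ∑ j ∈ range (m / 2 + 1), lucasTerm P Q m j

lemma lucasTerm_zero (m : ℕ) : lucasTerm P Q m 0 = P ^ m := by simp [lucasTerm]

lemma lucasTerm_eq_zero {m j : ℕ} (h : m < 2 * j) : lucasTerm P Q m j = 0 := by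
  have : m - j < j := by omega
  simp [lucasTerm, Nat.choose_eq_zero_of_lt this]

lemma lucasU_eq_sum_range (m : ℕ) : lucasU P Q m = ∑ j ∈ range (m + 1), lucasTerm P Q m j :=
  sum_subset (range_subset_range.2 (by omega)) fun j _ hj ↦
    lucasTerm_eq_zero P Q (by simp only [mem_range] at hj; omega)

lemma lucasTerm_add_two_succ (m j : ℕ) :
    lucasTerm P Q (m + 2) (j + 1) = P * lucasTerm P Q (m + 1) (j + 1) - Q * lucasTerm P Q m j := by
  rcases lt_trichotomy m (2 * j) with h | rfl | h
  · rw [lucasTerm_eq_zero P Q (by omega : m + 2 < 2 * (j + 1)),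
      lucasTerm_eq_zero P Q (by omega : m + 1 < 2 * (j + 1)), lucasTerm_eq_zero P Q h]
    ring
  · rw [lucasTerm_eq_zero P Q (by omega : 2 * j + 1 < 2 * (j + 1)), lucasTerm, lucasTerm,
      show 2 * j + 2 - (j + 1) = j + 1 by omega, show 2 * j + 2 - 2 * (j + 1) = 0 by omega,
      show 2 * j - j = j by omega, Nat.sub_self, Nat.choose_self, Nat.choose_self]
    push_cast
    ring
  · have hchoose :
        (m + 2 - (j + 1)).choose (j + 1) = (m - j).choose j + (m - j).choose (j + 1) := by
      rw [show m + 2 - (j + 1) = m - j + 1 by omega, Nat.choose_succ_succ]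
    rw [lucasTerm, lucasTerm, lucasTerm, hchoose, show m + 1 - (j + 1) = m - j by omega,
      show m + 2 - 2 * (j + 1) = m - 2 * j - 1 + 1 by omega,
      show m + 1 - 2 * (j + 1) = m - 2 * j - 1 by omega,
      show m - 2 * j = m - 2 * j - 1 + 1 by omega]
    push_cast
    ring

lemma lucasU_zero : lucasU P Q 0 = 1 := by simp [lucasU, lucasTerm]

lemma lucasU_one : lucasU P Q 1 = P := by simp [lucasU, lucasTerm]

lemma lucasU_add_two (m : ℕ) :
    lucasU P Q (m + 2) = P * lucasU P Q (m + 1) - Q * lucasU P Q m := by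
  have hm : ∑ j ∈ range (m + 2), lucasTerm P Q m j = lucasU P Q m := by
    rw [lucasU_eq_sum_range, sum_range_succ _ (m + 1), lucasTerm_eq_zero P Q (by omega), add_zero]
  have hm1 : ∑ j ∈ range (m + 2), lucasTerm P Q (m + 1) (j + 1) =
      lucasU P Q (m + 1) - lucasTerm P Q (m + 1) 0 := by
    rw [sum_range_succ, lucasTerm_eq_zero P Q (show m + 1 < 2 * (m + 1 + 1) by omega), add_zero,
      lucasU_eq_sum_range, sum_range_succ' (lucasTerm P Q (m + 1)) (m + 1), add_sub_cancel_right]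
  rw [lucasU_eq_sum_range, sum_range_succ',
    sum_congr rfl fun j _ ↦ lucasTerm_add_two_succ P Q m j, sum_sub_distrib, ← mul_sum,
    ← mul_sum, hm, hm1, lucasTerm_zero, lucasTerm_zero]
  ring

end Lucas

section Particular

variable {K : Type*} [Field K] (P Q A : K)

/-- Closed form of the coefficients of the power series `A / (Q + P z + z²)`. -/
def quadInvCoeff (m : ℕ) : K := (-1) ^ m * A / Q ^ (m + 1) * lucasU P Q m

noncomputable def quadDiffOp (p : K[X]) : K[X] :=
  derivative (derivative p) + C P * derivative p + C Q * p

/-- `∑ₘ rₘ Dᵐ Xⁿ` with `rₘ = quadInvCoeff P Q A m`, written out in the monomial basis. -/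
noncomputable def particularPoly (n : ℕ) : K[X] :=
  ∑ i ∈ range (n + 1), C ((n ! / i ! : K) * quadInvCoeff P Q A (n - i)) * X ^ i

lemma coeff_quadDiffOp (p : K[X]) (k : ℕ) :
    (quadDiffOp P Q p).coeff k =
      (k + 1) * (k + 2) * p.coeff (k + 2) + (k + 1) * P * p.coeff (k + 1) + Q * p.coeff k := by
  simp only [quadDiffOp, coeff_add, coeff_C_mul, coeff_derivative]
  push_cast
  ring

lemma coeff_particularPoly (n k : ℕ) : (particularPoly P Q A n).coeff k =
    if k ≤ n then (n ! / k ! : K) * quadInvCoeff P Q A (n - k) else 0 := by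
  simp only [particularPoly, finsetSum_coeff, coeff_C_mul_X_pow, sum_ite_eq, mem_range,
    Nat.lt_succ_iff]

lemma coeff_particularPoly_of_add_eq {n k m : ℕ} (h : k + m = n) :
    (particularPoly P Q A n).coeff k = (n ! / k ! : K) * quadInvCoeff P Q A m := by
  rw [coeff_particularPoly, if_pos (by omega), show n - k = m by omega]

lemma coeff_particularPoly_of_lt {n k : ℕ} (h : n < k) :
    (particularPoly P Q A n).coeff k = 0 := by
  rw [coeff_particularPoly, if_neg (by omega)]

variable {Q}

lemma mul_quadInvCoeff_zero (hQ : Q ≠ 0) : Q * quadInvCoeff P Q A 0 = A := by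
  simp only [quadInvCoeff, lucasU_zero]
  field_simp
  ring

lemma quadInvCoeff_one (hQ : Q ≠ 0) :
    Q * quadInvCoeff P Q A 1 + P * quadInvCoeff P Q A 0 = 0 := by
  simp only [quadInvCoeff, lucasU_zero, lucasU_one]
  field_simp
  ring

lemma quadInvCoeff_add_two (hQ : Q ≠ 0) (m : ℕ) :
    Q * quadInvCoeff P Q A (m + 2) + P * quadInvCoeff P Q A (m + 1) + quadInvCoeff P Q A m = 0 := by
  simp only [quadInvCoeff, lucasU_add_two]
  field_simp
  ring

lemma quadDiffOp_particularPoly [CharZero K] (hQ : Q ≠ 0) (n : ℕ) :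
    quadDiffOp P Q (particularPoly P Q A n) = C A * X ^ n := by
  ext k
  rw [coeff_quadDiffOp, coeff_C_mul_X_pow]
  rcases Nat.lt_or_ge n k with hk | hk
  · rw [coeff_particularPoly_of_lt P Q A (by omega), coeff_particularPoly_of_lt P Q A (by omega),
      coeff_particularPoly_of_lt P Q A hk, if_neg (by omega)]
    ring
  obtain ⟨m, rfl⟩ := Nat.exists_eq_add_of_le hk
  have hk0 : (k ! : K) ≠ 0 := Nat.cast_ne_zero.2 (Nat.factorial_ne_zero k)
  have hk1 : (k + 1 : K) ≠ 0 := by exact_mod_cast k.succ_ne_zero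
  have hk2 : (k + 1 + 1 : K) ≠ 0 := by exact_mod_cast (k + 1).succ_ne_zero
  rcases m with _ | _ | m
  · rw [Nat.add_zero, coeff_particularPoly_of_lt P Q A (by omega),
      coeff_particularPoly_of_lt P Q A (by omega),
      coeff_particularPoly_of_add_eq P Q A (n := k) (m := 0) rfl, if_pos rfl, div_self hk0,
      one_mul, mul_quadInvCoeff_zero P A hQ]
    ring
  · rw [coeff_particularPoly_of_lt P Q A (by omega),
      coeff_particularPoly_of_add_eq P Q A (m := 0) rfl,
      coeff_particularPoly_of_add_eq P Q A (m := 1) rfl, if_neg (by omega)]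
    trans ((k + 1) ! / k ! : K) * (Q * quadInvCoeff P Q A 1 + P * quadInvCoeff P Q A 0)
    · push_cast [Nat.factorial_succ]
      field_simp
      ring
    · rw [quadInvCoeff_one P A hQ, mul_zero]
  · rw [coeff_particularPoly_of_add_eq P Q A (k := k + 2) (m := m) (by omega),
      coeff_particularPoly_of_add_eq P Q A (k := k + 1) (m := m + 1) (by omega),
      coeff_particularPoly_of_add_eq P Q A (m := m + 2) rfl, if_neg (by omega)]
    trans ((k + (m + 2)) ! / k ! : K) * (Q * quadInvCoeff P Q A (m + 2) +
      P * quadInvCoeff P Q A (m + 1) + quadInvCoeff P Q A m)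
    · push_cast [Nat.factorial_succ]
      field_simp
      ring
    · rw [quadInvCoeff_add_two P A hQ m, mul_zero]

end Particular

lemma hasDerivAt_rpow_mul_eval_log (β : ℝ) (p : ℝ[X]) {x : ℝ} (hx : 0 < x) :
    HasDerivAt (fun x ↦ x ^ β * p.eval (log x))
      (x ^ (β - 1) * (C β * p + derivative p).eval (log x)) x := by
  have h := (hasDerivAt_rpow_const (p := β) (Or.inl hx.ne')).fun_mul
    ((p.hasDerivAt (log x)).comp x (hasDerivAt_log hx.ne'))
  refine h.congr_deriv ?_
  rw [rpow_sub_one hx.ne']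
  simp only [Function.comp_apply, eval_add, eval_mul, eval_C]
  field_simp

lemma deriv_rpow_mul_eval_log (β : ℝ) (p : ℝ[X]) {x : ℝ} (hx : 0 < x) :
    deriv (fun x ↦ x ^ β * p.eval (log x)) x
      = x ^ (β - 1) * (C β * p + derivative p).eval (log x) :=
  (hasDerivAt_rpow_mul_eval_log β p hx).deriv

lemma euler_rpow_mul_eval_log (a b α : ℝ) (p : ℝ[X]) {x : ℝ} (hx : 0 < x) :
    x ^ 2 * deriv (deriv fun x ↦ x ^ α * p.eval (log x)) x
        + a * x * deriv (fun x ↦ x ^ α * p.eval (log x)) x + b * (x ^ α * p.eval (log x))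
      = x ^ α * (quadDiffOp (2 * α + a - 1) (α * (α - 1) + a * α + b) p).eval (log x) := by
  have hderiv : deriv (fun x ↦ x ^ α * p.eval (log x)) =ᶠ[nhds x]
      fun x ↦ x ^ (α - 1) * (C α * p + derivative p).eval (log x) :=
    Filter.eventually_of_mem (Ioi_mem_nhds hx) fun y hy ↦ deriv_rpow_mul_eval_log α p hy
  rw [hderiv.deriv_eq, deriv_rpow_mul_eval_log _ _ hx, deriv_rpow_mul_eval_log _ _ hx,
    rpow_sub_one hx.ne', rpow_sub_one hx.ne']
  simp only [quadDiffOp, derivative_add, derivative_mul, derivative_C, zero_mul, zero_add,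
    eval_add, eval_mul, eval_C]
  field_simp
  ring

theorem stmt_4_general (a b α A : ℝ) (n : ℕ)
    (hQ : α * (α - 1) + a * α + b ≠ 0)
    (c : ℕ → ℝ)
    (hc : ∀ i, i ≤ n →
      c i = (-1 : ℝ) ^ (n - i) * ((n.factorial : ℝ) / (i.factorial : ℝ)) *
        (A / (α * (α - 1) + a * α + b) ^ (n - i + 1)) *
        ∑ j ∈ Finset.range ((n - i) / 2 + 1),
          (-1 : ℝ) ^ j * ((n - i - j).choose j : ℝ) *
            (2 * α + a - 1) ^ (n - i - 2 * j) * (α * (α - 1) + a * α + b) ^ j) :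
    ∀ x > (0 : ℝ),
      x ^ 2 * deriv (deriv
          (fun x : ℝ => x ^ α * ∑ i ∈ Finset.range (n + 1), c i * Real.log x ^ i)) x
        + a * x * deriv
          (fun x : ℝ => x ^ α * ∑ i ∈ Finset.range (n + 1), c i * Real.log x ^ i) x
        + b * (x ^ α * ∑ i ∈ Finset.range (n + 1), c i * Real.log x ^ i)
      = A * x ^ α * Real.log x ^ n := by
  intro x hx
  have hy (y : ℝ) : y ^ α * ∑ i ∈ range (n + 1), c i * log y ^ i =
      y ^ α * (particularPoly (2 * α + a - 1) (α * (α - 1) + a * α + b) A n).eval (log y) := by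
    simp only [particularPoly, eval_finsetSum, eval_mul, eval_C, eval_pow, eval_X]
    congr 1
    refine sum_congr rfl fun i hi ↦ ?_
    rw [hc i (Nat.lt_succ_iff.1 (mem_range.1 hi)), quadInvCoeff, lucasU]
    simp only [lucasTerm]
    ring
  simp only [hy]
  rw [euler_rpow_mul_eval_log a b α _ hx, quadDiffOp_particularPoly _ _ hQ]
  simp only [eval_mul, eval_C, eval_pow, eval_X]
  ring

/-- closed-form coefficients, non-root case. -/
theorem stmt_4 (a b α A : ℝ) (n : ℕ) (hα : α ≠ 0) (hA : A ≠ 0)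
    (hQ : α * (α - 1) + a * α + b ≠ 0)
    (c : ℕ → ℝ)
    (hc : ∀ i, i ≤ n →
      c i = (-1 : ℝ) ^ (n - i) * ((n.factorial : ℝ) / (i.factorial : ℝ)) *
        (A / (α * (α - 1) + a * α + b) ^ (n - i + 1)) *
        ∑ j ∈ Finset.range ((n - i) / 2 + 1),
          (-1 : ℝ) ^ j * ((n - i - j).choose j : ℝ) *
            (2 * α + a - 1) ^ (n - i - 2 * j) * (α * (α - 1) + a * α + b) ^ j) :
    ∀ x > (0 : ℝ),
      x ^ 2 * deriv (deriv
          (fun x : ℝ => x ^ α * ∑ i ∈ Finset.range (n + 1), c i * Real.log x ^ i)) x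
        + a * x * deriv
          (fun x : ℝ => x ^ α * ∑ i ∈ Finset.range (n + 1), c i * Real.log x ^ i) x
        + b * (x ^ α * ∑ i ∈ Finset.range (n + 1), c i * Real.log x ^ i)
      = A * x ^ α * Real.log x ^ n :=
  stmt_4_general a b α A n hQ c hc
end

section
/- Let a, b ∈ ℝ, Q(β) = β(β−1) + aβ + b, and suppose Q(α) ≠ 0. Define the sequences: (recursive) ĉ_n = A/Q(α), ĉ_{n−1} = −nA·Q'(α)/Q(α)², ĉ_i = −((i+1)/Q(α))·[Q'(α)·ĉ_{i+1} + (i+2)·ĉ_{i+2}] for i ≤ n−2; and (closed form) c_i = (−1)^{n−i}·(n!/i!)·(A/Q(α)^{n−i+1})·Σ_{j=0}^{⌊(n−i)/2⌋}(−1)^j·C(n−i−j,j)·Q'(α)^{n−i−2j}·Q(α)^j. Then ĉ_i = c_i for all i = 0,…,n. -/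
/-!
The closed-form sum is `E_k(P, Q)` with `k = n - i`, `P = Q'(α)`, `Q = Q(α)`, where `E_k(x, a)` is
the Dickson polynomial of the second kind: Pascal's rule gives it the recurrence
`E_{k+2} = P E_{k+1} - Q E_k`, with `E_0 = 1`, `E_1 = P`. Feeding this into the closed form shows
that it satisfies the same two-step recurrence as `ĉ`, with the same values at `i = n` and
`i = n - 1`, so the two agree by induction on `n - i`.
-/

open Finset

namespace Polynomial

variable {R : Type*} [CommRing R]

def dicksonTwoCoeff (x a : R) (n j : ℕ) : R :=
  (-1) ^ j * ((n - j).choose j : R) * x ^ (n - 2 * j) * a ^ j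

theorem dicksonTwoCoeff_eq_zero (x a : R) {n j : ℕ} (h : n - j < j) :
    dicksonTwoCoeff x a n j = 0 := by
  simp [dicksonTwoCoeff, Nat.choose_eq_zero_of_lt h]

@[simp]
theorem dicksonTwoCoeff_zero (x a : R) (n : ℕ) : dicksonTwoCoeff x a n 0 = x ^ n := by
  simp [dicksonTwoCoeff]

theorem sum_range_dicksonTwoCoeff (x a : R) {n m : ℕ} (hm : n / 2 + 1 ≤ m) :
    ∑ j ∈ range (n / 2 + 1), dicksonTwoCoeff x a n j =
      ∑ j ∈ range m, dicksonTwoCoeff x a n j :=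
  sum_subset (range_subset_range.mpr hm) fun j _ hj ↦
    dicksonTwoCoeff_eq_zero x a (by simp only [mem_range] at hj; omega)

/-- Pascal's rule for the coefficients. -/
theorem dicksonTwoCoeff_add_two_succ (x a : R) (n j : ℕ) :
    dicksonTwoCoeff x a (n + 2) (j + 1) =
      x * dicksonTwoCoeff x a (n + 1) (j + 1) - a * dicksonTwoCoeff x a n j := by
  rcases lt_or_ge n j with hnj | hjn
  · rw [dicksonTwoCoeff_eq_zero x a (by omega), dicksonTwoCoeff_eq_zero x a (by omega),
      dicksonTwoCoeff_eq_zero x a (by omega)]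
    ring
  have pascal : (n + 2 - (j + 1)).choose (j + 1) = (n - j).choose j + (n - j).choose (j + 1) := by
    rw [show n + 2 - (j + 1) = n - j + 1 by omega, Nat.choose_succ_succ']
  simp only [dicksonTwoCoeff, pascal, show n + 1 - (j + 1) = n - j by omega,
    show n + 2 - 2 * (j + 1) = n - 2 * j by omega]
  rcases lt_or_ge (n - j) (j + 1) with hlt | hle
  · simp only [Nat.choose_eq_zero_of_lt hlt]
    push_cast
    ring
  · rw [show n - 2 * j = n + 1 - 2 * (j + 1) + 1 by omega]
    push_cast
    ring

theorem dickson_two_eval_eq_sum (x a : R) (n : ℕ) :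
    (dickson 2 a n).eval x = ∑ j ∈ range (n / 2 + 1), dicksonTwoCoeff x a n j := by
  induction n using Nat.twoStepInduction with
  | zero => norm_num
  | one => simp
  | more n ih₀ ih₁ =>
    rw [dickson_add_two, eval_sub, eval_mul, eval_mul, eval_X, eval_C, ih₀, ih₁,
      sum_range_dicksonTwoCoeff x a (n := n + 2) (m := n + 3) (by omega),
      sum_range_dicksonTwoCoeff x a (n := n + 1) (m := n + 3) (by omega),
      sum_range_dicksonTwoCoeff x a (n := n) (m := n + 2) (by omega),
      sum_range_succ', sum_range_succ' _ (n + 2), mul_add, mul_sum, mul_sum,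
      ← sub_add_eq_add_sub, ← sum_sub_distrib]
    simp only [dicksonTwoCoeff_add_two_succ, dicksonTwoCoeff_zero, ← pow_succ']

end Polynomial

section

variable {K : Type*} [Field K] [CharZero K]

open Nat Polynomial

/-- Indexed by `k = n - i` rather than `i`, so that no truncated subtraction occurs. -/
noncomputable def closedFormCoeff (A P Q : K) (n i k : ℕ) : K :=
  (-1) ^ k * ((n ! : K) / i !) * (A / Q ^ (k + 1)) * (dickson 2 Q k).eval P

theorem closedFormCoeff_add_two {Q : K} (hQ : Q ≠ 0) (A P : K) (n i k : ℕ) :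
    -(((i : K) + 1) / Q) *
        (P * closedFormCoeff A P Q n (i + 1) (k + 1) +
          ((i : K) + 2) * closedFormCoeff A P Q n (i + 2) k) =
      closedFormCoeff A P Q n i (k + 2) := by
  have hi : (i ! : K) ≠ 0 := by exact_mod_cast factorial_ne_zero i
  have hi₁ : (i : K) + 1 ≠ 0 := by exact_mod_cast succ_ne_zero i
  have hi₂ : (i : K) + 2 ≠ 0 := by exact_mod_cast succ_ne_zero (i + 1)
  have hf₁ : ((i + 1) ! : K) = (i + 1) * i ! := by push_cast [factorial_succ]; ring
  have hf₂ : ((i + 2) ! : K) = (i + 2) * (i + 1) * i ! := by push_cast [factorial_succ]; ring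
  simp only [closedFormCoeff, dickson_add_two, eval_sub, eval_mul, eval_X, eval_C, hf₁, hf₂]
  field_simp
  ring

theorem eq_closedFormCoeff_of_recurrence {A P Q : K} (hQ : Q ≠ 0) {n : ℕ} {c : ℕ → K}
    (hn : c n = A / Q)
    (hn₁ : 1 ≤ n → c (n - 1) = -(n : K) * A * P / Q ^ 2)
    (hrec : ∀ i, i + 2 ≤ n →
      c i = -(((i : K) + 1) / Q) * (P * c (i + 1) + ((i : K) + 2) * c (i + 2)))
    {i : ℕ} (hi : i ≤ n) :
    c i = closedFormCoeff A P Q n i (n - i) := by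
  suffices h : ∀ k j, j + k = n → c j = closedFormCoeff A P Q n j k from h _ _ (by omega)
  intro k
  induction k using Nat.twoStepInduction with
  | zero =>
    intro i hik
    obtain rfl : i = n := by omega
    have hi : (i ! : K) ≠ 0 := by exact_mod_cast factorial_ne_zero i
    norm_num [closedFormCoeff, hn, hi]
  | one =>
    intro i hik
    obtain rfl : n = i + 1 := by omega
    have hi : (i ! : K) ≠ 0 := by exact_mod_cast factorial_ne_zero i
    have hc : c i = -((i + 1 : ℕ) : K) * A * P / Q ^ 2 := hn₁ (by omega)
    rw [hc, closedFormCoeff, dickson_one, eval_X, factorial_succ]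
    push_cast
    field_simp
  | more k ih₀ ih₁ =>
    intro i hik
    rw [hrec i (by omega), ih₁ (i + 1) (by omega), ih₀ (i + 2) (by omega),
      closedFormCoeff_add_two hQ]

end

theorem stmt_6_general (a b α A : ℝ) (n : ℕ)
    (hQ : α * (α - 1) + a * α + b ≠ 0)
    (chat : ℕ → ℝ)
    (hcn : chat n = A / (α * (α - 1) + a * α + b))
    (hcn1 : 1 ≤ n →
      chat (n - 1) = -(n : ℝ) * A * (2 * α + a - 1) / (α * (α - 1) + a * α + b) ^ 2)
    (hrec : ∀ i, i + 2 ≤ n →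
      chat i = -(((i : ℝ) + 1) / (α * (α - 1) + a * α + b)) *
        ((2 * α + a - 1) * chat (i + 1) + ((i : ℝ) + 2) * chat (i + 2))) :
    ∀ i ≤ n,
      chat i = (-1 : ℝ) ^ (n - i) * ((n.factorial : ℝ) / (i.factorial : ℝ)) *
        (A / (α * (α - 1) + a * α + b) ^ (n - i + 1)) *
        ∑ j ∈ Finset.range ((n - i) / 2 + 1),
          (-1 : ℝ) ^ j * ((n - i - j).choose j : ℝ) *
            (2 * α + a - 1) ^ (n - i - 2 * j) * (α * (α - 1) + a * α + b) ^ j := by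
  intro i hi
  rw [eq_closedFormCoeff_of_recurrence hQ hcn hcn1 hrec hi, closedFormCoeff,
    Polynomial.dickson_two_eval_eq_sum]
  rfl

/-- the recursive and closed-form coefficients coincide (non-root case). -/
theorem stmt_6 (a b α A : ℝ) (n : ℕ) (hA : A ≠ 0)
    (hQ : α * (α - 1) + a * α + b ≠ 0)
    (chat : ℕ → ℝ)
    (hcn : chat n = A / (α * (α - 1) + a * α + b))
    (hcn1 : 1 ≤ n →
      chat (n - 1) = -(n : ℝ) * A * (2 * α + a - 1) / (α * (α - 1) + a * α + b) ^ 2)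
    (hrec : ∀ i, i + 2 ≤ n →
      chat i = -(((i : ℝ) + 1) / (α * (α - 1) + a * α + b)) *
        ((2 * α + a - 1) * chat (i + 1) + ((i : ℝ) + 2) * chat (i + 2))) :
    ∀ i ≤ n,
      chat i = (-1 : ℝ) ^ (n - i) * ((n.factorial : ℝ) / (i.factorial : ℝ)) *
        (A / (α * (α - 1) + a * α + b) ^ (n - i + 1)) *
        ∑ j ∈ Finset.range ((n - i) / 2 + 1),
          (-1 : ℝ) ^ j * ((n - i - j).choose j : ℝ) *
            (2 * α + a - 1) ^ (n - i - 2 * j) * (α * (α - 1) + a * α + b) ^ j :=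
  stmt_6_general a b α A n hQ chat hcn hcn1 hrec
end

section
/- Let a, b ∈ ℝ with b ≠ 0, c ∈ ℝ, κ > −1, and let β₁, β₂ be distinct simple roots of Q(β) = β(β−1) + aβ + b. Let θ satisfy Q(θ) ≠ 0, and ρ, I, δ₁, δ₂ ∈ ℝ. Define V₁(x) = δ₁x^{β₁} + δ₂x^{β₂} + ξ₁¹x^θ + ξ₂¹ with ξ₁¹ = cρ(1+κ)^θ/Q(θ), ξ₂¹ = −cI/b, and define V_p²(x) = η₁²(ln x)x^{β₁} + η₂²(ln x)x^{β₂} + ξ₁²x^θ + ξ₂² with η₁² = δ₁c(1+κ)^{β₁}/Q'(β₁), η₂² = δ₂c(1+κ)^{β₂}/Q'(β₂), ξ₁² = ρ(c(1+κ)^θ/Q(θ))², ξ₂² = −(c/b)²I. Then for all x > 0: x²(V_p²)''(x) + a·x·(V_p²)'(x) + b·V_p²(x) = c·V₁(x(1+κ)). -/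
/-!
The Euler operator `L f = x² f'' + a x f' + b f` sends `x ^ p` to `Q(p) x ^ p` and
`log x * x ^ p` to `Q'(p) x ^ p + Q(p) log x * x ^ p`, where `Q(p) = p (p - 1) + a p + b`.
At a root `β` of `Q` the logarithmic term resonates and only `Q'(β) x ^ β` survives, which is
why the coefficients of `V_p²` carry the factors `1 / Q'(βᵢ)` and `1 / Q(θ)`. The right-hand
side matches after `(x (1 + κ)) ^ p = x ^ p (1 + κ) ^ p`.
-/

open Real Set Filter Topology

noncomputable def eulerOp (a b : ℝ) (f : ℝ → ℝ) (x : ℝ) : ℝ :=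
  x ^ 2 * deriv (deriv f) x + a * x * deriv f x + b * f x

section
variable {a b : ℝ} {f g : ℝ → ℝ} {x : ℝ}

theorem eulerOp_add {U : Set ℝ} (hU : IsOpen U) (hf : ContDiffOn ℝ 2 f U)
    (hg : ContDiffOn ℝ 2 g U) (hx : x ∈ U) :
    eulerOp a b (fun y => f y + g y) x = eulerOp a b f x + eulerOp a b g x := by
  have hf' := (hf.deriv_of_isOpen hU le_rfl).differentiableOn one_ne_zero
  have hg' := (hg.deriv_of_isOpen hU le_rfl).differentiableOn one_ne_zero
  have hderiv : deriv (fun y => f y + g y) =ᶠ[𝓝 x] fun y => deriv f y + deriv g y := by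
    filter_upwards [hU.mem_nhds hx] with y hy
    exact deriv_fun_add ((hf.differentiableOn two_ne_zero).differentiableAt (hU.mem_nhds hy))
      ((hg.differentiableOn two_ne_zero).differentiableAt (hU.mem_nhds hy))
  rw [eulerOp, eulerOp, eulerOp, hderiv.deriv_eq, hderiv.eq_of_nhds,
    deriv_fun_add (hf'.differentiableAt (hU.mem_nhds hx)) (hg'.differentiableAt (hU.mem_nhds hx))]
  ring

theorem eulerOp_const_mul (k : ℝ) : eulerOp a b (fun y => k * f y) x = k * eulerOp a b f x := by
  simp only [eulerOp, deriv_const_mul_field']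
  ring

theorem eulerOp_const (k : ℝ) : eulerOp a b (fun _ => k) x = b * k := by
  simp [eulerOp]

theorem eulerOp_rpow (hx : 0 < x) (p : ℝ) :
    eulerOp a b (fun y => y ^ p) x = (p * (p - 1) + a * p + b) * x ^ p := by
  simp only [eulerOp, deriv_rpow_const', deriv_const_mul_field', rpow_sub_one hx.ne']
  field_simp

theorem hasDerivAt_log_mul_rpow (hx : 0 < x) (p : ℝ) :
    HasDerivAt (fun y => log y * y ^ p) (x ^ (p - 1) + p * (log x * x ^ (p - 1))) x := by
  refine ((hasDerivAt_log hx.ne').fun_mul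
    (hasDerivAt_rpow_const (p := p) (Or.inl hx.ne'))).congr_deriv ?_
  rw [rpow_sub_one hx.ne']
  field_simp

theorem eulerOp_log_mul_rpow (hx : 0 < x) (p : ℝ) :
    eulerOp a b (fun y => log y * y ^ p) x
      = (2 * p + a - 1) * x ^ p + (p * (p - 1) + a * p + b) * (log x * x ^ p) := by
  have hderiv : deriv (fun y => log y * y ^ p) =ᶠ[𝓝 x]
      fun y => y ^ (p - 1) + p * (log y * y ^ (p - 1)) := by
    filter_upwards [Ioi_mem_nhds hx] with y hy using (hasDerivAt_log_mul_rpow hy p).deriv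
  have hderiv2 := (hasDerivAt_rpow_const (p := p - 1) (Or.inl hx.ne')).fun_add
    ((hasDerivAt_log_mul_rpow hx (p - 1)).const_mul p)
  rw [eulerOp, hderiv.deriv_eq, hderiv2.deriv, (hasDerivAt_log_mul_rpow hx p).deriv]
  simp only [rpow_sub_one hx.ne']
  field_simp
  ring

theorem eulerOp_log_mul_rpow_add_rpow_add_const {A B C D β₁ β₂ θ : ℝ}
    (hβ₁ : β₁ * (β₁ - 1) + a * β₁ + b = 0) (hβ₂ : β₂ * (β₂ - 1) + a * β₂ + b = 0)
    (hx : 0 < x) :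
    eulerOp a b (fun y => A * log y * y ^ β₁ + B * log y * y ^ β₂ + C * y ^ θ + D) x
      = A * (2 * β₁ + a - 1) * x ^ β₁ + B * (2 * β₂ + a - 1) * x ^ β₂
        + C * (θ * (θ - 1) + a * θ + b) * x ^ θ + b * D := by
  have hreassoc : (fun y => A * log y * y ^ β₁ + B * log y * y ^ β₂ + C * y ^ θ + D)
      = fun y => A * (log y * y ^ β₁) + B * (log y * y ^ β₂) + C * y ^ θ + D := by
    funext y
    ring
  have hne : Ioi (0 : ℝ) ⊆ {0}ᶜ := fun _ hy => ne_of_gt hy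
  have hrpow (p : ℝ) : ContDiffOn ℝ 2 (fun y : ℝ => y ^ p) (Ioi 0) :=
    contDiffOn_id.rpow_const_of_ne hne
  have hlog (p : ℝ) : ContDiffOn ℝ 2 (fun y => log y * y ^ p) (Ioi 0) :=
    (contDiffOn_log.mono hne).mul (hrpow p)
  have h₁ := contDiffOn_const (c := A).mul (hlog β₁)
  have h₂ := contDiffOn_const (c := B).mul (hlog β₂)
  have h₃ := contDiffOn_const (c := C).mul (hrpow θ)
  rw [hreassoc, eulerOp_add isOpen_Ioi ((h₁.add h₂).add h₃) contDiffOn_const hx,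
    eulerOp_add isOpen_Ioi (h₁.add h₂) h₃ hx, eulerOp_add isOpen_Ioi h₁ h₂ hx,
    eulerOp_const_mul, eulerOp_const_mul, eulerOp_const_mul, eulerOp_log_mul_rpow hx,
    eulerOp_log_mul_rpow hx, eulerOp_rpow hx, eulerOp_const, hβ₁, hβ₂]
  ring

end

theorem stmt_14_general (a b c κ θ ρ I δ₁ δ₂ β₁ β₂ : ℝ) (hκ : κ > -1)
    (hβ₁ : β₁ * (β₁ - 1) + a * β₁ + b = 0)
    (hβ₂ : β₂ * (β₂ - 1) + a * β₂ + b = 0)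
    (hβ₁' : 2 * β₁ + a - 1 ≠ 0)
    (hβ₂' : 2 * β₂ + a - 1 ≠ 0) :
    ∀ x > (0 : ℝ),
      x ^ 2 * deriv (deriv (fun x : ℝ =>
          δ₁ * c * (1 + κ) ^ β₁ / (2 * β₁ + a - 1) * Real.log x * x ^ β₁
          + δ₂ * c * (1 + κ) ^ β₂ / (2 * β₂ + a - 1) * Real.log x * x ^ β₂
          + ρ * (c * (1 + κ) ^ θ / (θ * (θ - 1) + a * θ + b)) ^ 2 * x ^ θ
          + (-(c / b) ^ 2 * I))) x
        + a * x * deriv (fun x : ℝ =>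
          δ₁ * c * (1 + κ) ^ β₁ / (2 * β₁ + a - 1) * Real.log x * x ^ β₁
          + δ₂ * c * (1 + κ) ^ β₂ / (2 * β₂ + a - 1) * Real.log x * x ^ β₂
          + ρ * (c * (1 + κ) ^ θ / (θ * (θ - 1) + a * θ + b)) ^ 2 * x ^ θ
          + (-(c / b) ^ 2 * I)) x
        + b * (δ₁ * c * (1 + κ) ^ β₁ / (2 * β₁ + a - 1) * Real.log x * x ^ β₁
          + δ₂ * c * (1 + κ) ^ β₂ / (2 * β₂ + a - 1) * Real.log x * x ^ β₂
          + ρ * (c * (1 + κ) ^ θ / (θ * (θ - 1) + a * θ + b)) ^ 2 * x ^ θ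
          + (-(c / b) ^ 2 * I))
      = c * (δ₁ * (x * (1 + κ)) ^ β₁ + δ₂ * (x * (1 + κ)) ^ β₂
          + c * ρ * (1 + κ) ^ θ / (θ * (θ - 1) + a * θ + b) * (x * (1 + κ)) ^ θ
          + (-(c * I) / b)) := by
  intro x hx
  have hκ₀ : 0 ≤ 1 + κ := by linarith
  have hL := eulerOp_log_mul_rpow_add_rpow_add_const (a := a) (b := b)
    (A := δ₁ * c * (1 + κ) ^ β₁ / (2 * β₁ + a - 1))
    (B := δ₂ * c * (1 + κ) ^ β₂ / (2 * β₂ + a - 1))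
    (C := ρ * (c * (1 + κ) ^ θ / (θ * (θ - 1) + a * θ + b)) ^ 2) (D := -(c / b) ^ 2 * I)
    (θ := θ) hβ₁ hβ₂ hx
  rw [eulerOp] at hL
  rw [hL, mul_rpow hx.le hκ₀, mul_rpow hx.le hκ₀, mul_rpow hx.le hκ₀]
  field_simp

/-- second-step particular solution V_p² in the backwards construction. -/
theorem stmt_14 (a b c κ θ ρ I δ₁ δ₂ β₁ β₂ : ℝ) (hb : b ≠ 0) (hκ : κ > -1)
    (hβ₁ : β₁ * (β₁ - 1) + a * β₁ + b = 0)
    (hβ₂ : β₂ * (β₂ - 1) + a * β₂ + b = 0)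
    (hβne : β₁ ≠ β₂)
    (hβ₁' : 2 * β₁ + a - 1 ≠ 0)
    (hβ₂' : 2 * β₂ + a - 1 ≠ 0)
    (hQθ : θ * (θ - 1) + a * θ + b ≠ 0) :
    ∀ x > (0 : ℝ),
      x ^ 2 * deriv (deriv (fun x : ℝ =>
          δ₁ * c * (1 + κ) ^ β₁ / (2 * β₁ + a - 1) * Real.log x * x ^ β₁
          + δ₂ * c * (1 + κ) ^ β₂ / (2 * β₂ + a - 1) * Real.log x * x ^ β₂
          + ρ * (c * (1 + κ) ^ θ / (θ * (θ - 1) + a * θ + b)) ^ 2 * x ^ θ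
          + (-(c / b) ^ 2 * I))) x
        + a * x * deriv (fun x : ℝ =>
          δ₁ * c * (1 + κ) ^ β₁ / (2 * β₁ + a - 1) * Real.log x * x ^ β₁
          + δ₂ * c * (1 + κ) ^ β₂ / (2 * β₂ + a - 1) * Real.log x * x ^ β₂
          + ρ * (c * (1 + κ) ^ θ / (θ * (θ - 1) + a * θ + b)) ^ 2 * x ^ θ
          + (-(c / b) ^ 2 * I)) x
        + b * (δ₁ * c * (1 + κ) ^ β₁ / (2 * β₁ + a - 1) * Real.log x * x ^ β₁
          + δ₂ * c * (1 + κ) ^ β₂ / (2 * β₂ + a - 1) * Real.log x * x ^ β₂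
          + ρ * (c * (1 + κ) ^ θ / (θ * (θ - 1) + a * θ + b)) ^ 2 * x ^ θ
          + (-(c / b) ^ 2 * I))
      = c * (δ₁ * (x * (1 + κ)) ^ β₁ + δ₂ * (x * (1 + κ)) ^ β₂
          + c * ρ * (1 + κ) ^ θ / (θ * (θ - 1) + a * θ + b) * (x * (1 + κ)) ^ θ
          + (-(c * I) / b)) :=
  stmt_14_general a b c κ θ ρ I δ₁ δ₂ β₁ β₂ hκ hβ₁ hβ₂ hβ₁' hβ₂'
end
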